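/- arXiv:1407.0475 — 6 statements merged into one kernel-verified Lean document; each statement's English description precedes it below -/
import Mathlib

section
/- Let A be a principal ideal domain and M a finitely generated torsion-free A-module. Then every nonzero pure submodule N of M contains a unimodular vector, i.e. a vector v ∈ N for which there exists an A-linear form θ : M → A with θ(v) = 1. -/
/-!
Over a PID a finitely generated torsion-free module is free. Hence `M ⧸ N` is free, so the
quotient map splits and `N` is a direct summand of `M`; and `N` itself is free and nonzero.
A coordinate function of a basis of `N`, composed with the projection `M → N`, is a linear
form taking the value `1` at the corresponding basis vector.
-/

def Module.IsUnimodular (R : Type*) {M : Type*} [Semiring R] [AddCommMonoid M] [Module R M]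
    (v : M) : Prop :=
  ∃ θ : M →ₗ[R] R, θ v = 1

namespace Module.IsUnimodular

variable {R M N : Type*} [Semiring R] [AddCommMonoid M] [Module R M] [AddCommMonoid N]
  [Module R N]

theorem map {v : N} (hv : IsUnimodular R v) {f : N →ₗ[R] M} {g : M →ₗ[R] N}
    (hgf : g (f v) = v) : IsUnimodular R (f v) := by
  obtain ⟨θ, hθ⟩ := hv
  exact ⟨θ ∘ₗ g, by rw [LinearMap.comp_apply, hgf, hθ]⟩

theorem exists_of_free [Module.Free R M] [Nontrivial M] : ∃ v : M, IsUnimodular R v := by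
  let b := Module.Free.chooseBasis R M
  obtain ⟨i⟩ := b.index_nonempty
  exact ⟨b i, b.coord i, by simp⟩

end Module.IsUnimodular

theorem Submodule.exists_retraction_of_projective_quotient {R M : Type*} [Ring R]
    [AddCommGroup M] [Module R M] (N : Submodule R M) [Module.Projective R (M ⧸ N)] :
    ∃ π : M →ₗ[R] N, ∀ x : N, π x = x := by
  obtain ⟨s, hs⟩ := N.mkQ.exists_rightInverse_of_surjective N.range_mkQ
  have hker : LinearMap.range (LinearMap.id - s ∘ₗ N.mkQ) = N := by
    rw [← LinearMap.ker_eq_range_of_comp_eq_id hs, N.ker_mkQ]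
  refine ⟨(LinearMap.id - s ∘ₗ N.mkQ).codRestrict N fun x ↦ hker.le ⟨x, rfl⟩, fun x ↦ ?_⟩
  ext
  simp [(Submodule.Quotient.mk_eq_zero N).mpr x.2]

/-- Let `A` be a PID and `M` a finitely generated torsion-free
`A`-module. Then every nonzero pure submodule `N` of `M` contains a unimodular
vector, i.e. some `v ∈ N` with `θ v = 1` for an `A`-linear form `θ : M → A`. -/
theorem exists_unimodular_of_pure_pid {A M : Type*} [CommRing A] [IsDomain A]
    [IsPrincipalIdealRing A] [AddCommGroup M] [Module A M]
    [Module.Finite A M] [NoZeroSMulDivisors A M]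
    (N : Submodule A M) (hpure : NoZeroSMulDivisors A (M ⧸ N)) (hN : N ≠ ⊥) :
    ∃ v ∈ N, ∃ θ : M →ₗ[A] A, θ v = 1 := by
  have : Module.Free A (M ⧸ N) := Module.free_of_finite_type_torsion_free'
  obtain ⟨π, hπ⟩ := N.exists_retraction_of_projective_quotient
  -- so that `N` is finitely generated, hence free
  have : IsNoetherian A M := isNoetherian_of_isNoetherianRing_of_finite A M
  have : Nontrivial N := Submodule.nontrivial_iff_ne_bot.mpr hN
  obtain ⟨v, hv⟩ := Module.IsUnimodular.exists_of_free (R := A) (M := N)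
  exact ⟨v, v.2, hv.map (f := N.subtype) (hπ v)⟩
end

section
/- Let A be a Dedekind domain and M a finitely generated torsion-free A-module. If N is a pure submodule of M with rank at least 2, then N contains a unimodular vector of M. -/
/-!
A pure submodule `P` of `M` has flat quotient, so `P ⊓ 𝔪 • M = 𝔪 • P`, and Nakayama shows that a
nonzero pure submodule lies in no `𝔪 • M` with `𝔪` maximal. Pick `0 ≠ u ∈ N` and a functional `θ₀`
with `a = θ₀ u ≠ 0`; rank `≥ 2` makes `L = N ⊓ ker θ₀` a nonzero pure submodule. For each of the
finitely many maximal `𝔪 ∋ a` choose `w_𝔪 ∈ L` with `u + w_𝔪 ∉ 𝔪 • M` and glue these by the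
Chinese remainder theorem into one `w ∈ L`. Then `v = u + w` lies in no `𝔪 • M`: for `𝔪 ∌ a`
because `θ₀ v = a`. As `M` is projective, the values `θ v` then generate the unit ideal.
-/

open TensorProduct

/-- The rank of a submodule `N ≤ M` over a domain `A`: the dimension over the
fraction field `K = Frac A` of the `K`-span of the image of `N` in `V = K ⊗[A] M`. -/
noncomputable def Submodule.rankIn {A M : Type*} [CommRing A] [IsDomain A]
    [AddCommGroup M] [Module A M] (N : Submodule A M) : ℕ :=
  Module.finrank (FractionRing A)
    (Submodule.span (FractionRing A)
      ((TensorProduct.mk A (FractionRing A) M 1) '' (N : Set M)))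

namespace Submodule

variable {A M : Type*} [CommRing A] [AddCommGroup M] [Module A M]

theorem noZeroSMulDivisors_quotient_iff (N : Submodule A M) :
    NoZeroSMulDivisors A (M ⧸ N) ↔ ∀ a : A, a ≠ 0 → ∀ m : M, a • m ∈ N → m ∈ N := by
  rw [noZeroSMulDivisors_iff_right_eq_zero_of_smul]
  refine forall₂_congr fun a _ => ⟨fun h m ham => ?_, fun h x hax => ?_⟩
  · rw [← Quotient.mk_eq_zero] at ham ⊢
    exact h _ ham
  · obtain ⟨m, rfl⟩ := Quotient.mk_surjective N x
    rw [← Quotient.mk_smul, Quotient.mk_eq_zero] at hax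
    exact (Quotient.mk_eq_zero N).mpr (h m hax)

theorem noZeroSMulDivisors_quotient_inf {N N' : Submodule A M}
    [NoZeroSMulDivisors A (M ⧸ N)] [NoZeroSMulDivisors A (M ⧸ N')] :
    NoZeroSMulDivisors A (M ⧸ (N ⊓ N')) := by
  have h := N.noZeroSMulDivisors_quotient_iff.mp inferInstance
  have h' := N'.noZeroSMulDivisors_quotient_iff.mp inferInstance
  exact (N ⊓ N').noZeroSMulDivisors_quotient_iff.mpr fun a ha m ham =>
    ⟨h a ha m ham.1, h' a ha m ham.2⟩

theorem not_le_smul_top_of_flat_quotient [NoZeroSMulDivisors A M] {P : Submodule A M}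
    [Module.Flat A (M ⧸ P)] (hfg : P.FG) (hP : P ≠ ⊥) {I : Ideal A} (hI : I ≠ ⊤) :
    ¬ P ≤ I • ⊤ := by
  intro hle
  have hPI : P ≤ I • P := by
    have := LinearMap.ker_inf_smul_top_eq_smul_of_flat I P.mkQ P.mkQ_surjective
    rw [P.ker_mkQ, inf_eq_left.mpr hle] at this
    exact this.le
  obtain ⟨r, hr1, hr0⟩ := exists_sub_one_mem_and_smul_eq_zero_of_fg_of_le_smul I P hfg hPI
  obtain ⟨p, hp, hp0⟩ := P.ne_bot_iff.mp hP
  have hr : r = 0 := (eq_zero_or_eq_zero_of_smul_eq_zero (hr0 p hp)).resolve_right hp0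
  exact hI ((Ideal.eq_top_iff_one I).mpr (by simpa [hr] using I.neg_mem hr1))

theorem exists_mem_add_notMem_of_not_le {L P : Submodule A M} (h : ¬ L ≤ P) (u : M) :
    ∃ w ∈ L, u + w ∉ P := by
  obtain ⟨w, hwL, hwP⟩ := SetLike.not_le_iff_exists.mp h
  by_cases hu : u ∈ P
  · exact ⟨w, hwL, fun huw => hwP ((P.add_mem_iff_right hu).mp huw)⟩
  · exact ⟨0, L.zero_mem, by simpa using hu⟩

theorem exists_mem_forall_add_notMem_smul_top (L : Submodule A M) (u : M)
    {T : Finset (Ideal A)} (hT : ∀ 𝔪 ∈ T, 𝔪.IsMaximal)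
    (h : ∀ 𝔪 ∈ T, ∃ w ∈ L, u + w ∉ 𝔪 • (⊤ : Submodule A M)) :
    ∃ w ∈ L, ∀ 𝔪 ∈ T, u + w ∉ 𝔪 • (⊤ : Submodule A M) := by
  classical
  induction T using Finset.induction_on with
  | empty => exact ⟨0, L.zero_mem, by simp⟩
  | insert 𝔪 T h𝔪T ih =>
    obtain ⟨w, hwL, hw⟩ :=
      ih (fun 𝔫 h𝔫 => hT 𝔫 (by simp [h𝔫])) (fun 𝔫 h𝔫 => h 𝔫 (by simp [h𝔫]))
    obtain ⟨w₁, hw₁L, hw₁⟩ := h 𝔪 (by simp)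
    have hcop : IsCoprime 𝔪 (⨅ 𝔫 ∈ T, 𝔫) := Ideal.isCoprime_biInf fun 𝔫 h𝔫 =>
      Ideal.isCoprime_iff_sup_eq.mpr <| (hT 𝔪 (by simp)).coprime_of_ne (hT 𝔫 (by simp [h𝔫]))
        (by rintro rfl; exact h𝔪T h𝔫)
    -- `w + c • (w₁ - w)` is `w₁` modulo `𝔪` and `w` modulo every ideal of `T`
    obtain ⟨i, hi, c, hc, hic⟩ := Ideal.isCoprime_iff_exists.mp hcop
    refine ⟨w + c • (w₁ - w), L.add_mem hwL (L.smul_mem c (L.sub_mem hw₁L hwL)), ?_⟩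
    simp only [Finset.mem_insert, forall_eq_or_imp]
    refine ⟨fun hmem => hw₁ ?_, fun 𝔫 h𝔫 hmem => hw 𝔫 h𝔫 ?_⟩
    · have : u + (w + c • (w₁ - w)) = (u + w₁) - i • (w₁ - w) := by
        rw [eq_sub_of_add_eq' hic]; module
      rw [this] at hmem
      exact ((𝔪 • ⊤ : Submodule A M).sub_mem_iff_left (smul_mem_smul hi mem_top)).mp hmem
    · rw [← add_assoc] at hmem
      exact ((𝔫 • ⊤ : Submodule A M).add_mem_iff_left
        (smul_mem_smul (Ideal.mem_iInf.mp (Ideal.mem_iInf.mp hc 𝔫) h𝔫) mem_top)).mp hmem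

end Submodule

theorem LinearMap.noZeroSMulDivisors_quotient_ker {A M P : Type*} [CommRing A] [AddCommGroup M]
    [Module A M] [AddCommGroup P] [Module A P] [NoZeroSMulDivisors A P] (f : M →ₗ[A] P) :
    NoZeroSMulDivisors A (M ⧸ LinearMap.ker f) :=
  (LinearMap.ker f).noZeroSMulDivisors_quotient_iff.mpr fun a ha m ham =>
    (eq_zero_or_eq_zero_of_smul_eq_zero (by simpa using ham)).resolve_left ha

namespace Module.Projective

variable {A M : Type*} [CommRing A] [AddCommGroup M] [Module A M] [Module.Projective A M]

theorem mem_smul_top_of_forall_dual_mem {I : Ideal A} {v : M}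
    (h : ∀ θ : Module.Dual A M, θ v ∈ I) : v ∈ I • (⊤ : Submodule A M) := by
  obtain ⟨s, hs⟩ := Module.Projective.out (R := A) (P := M)
  rw [← hs v, Finsupp.linearCombination_apply]
  exact Submodule.sum_mem _ fun i _ =>
    Submodule.smul_mem_smul (h (Finsupp.lapply i ∘ₗ s)) Submodule.mem_top

theorem exists_dual_eq_one_of_forall_notMem_smul_top {v : M}
    (hv : ∀ 𝔪 : Ideal A, 𝔪.IsMaximal → v ∉ 𝔪 • (⊤ : Submodule A M)) :
    ∃ θ : Module.Dual A M, θ v = 1 := by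
  by_contra! h
  let I : Ideal A := LinearMap.range (LinearMap.applyₗ v : Module.Dual A M →ₗ[A] A)
  have hI : I ≠ ⊤ := fun hI => by
    obtain ⟨θ, hθ⟩ := (Ideal.eq_top_iff_one I).mp hI
    exact h θ hθ
  obtain ⟨𝔪, h𝔪, hI𝔪⟩ := Ideal.exists_le_maximal I hI
  exact hv 𝔪 h𝔪 (mem_smul_top_of_forall_dual_mem fun θ => hI𝔪 ⟨θ, rfl⟩)

end Module.Projective

theorem LinearMap.apply_mem_of_mem_smul_top {A M : Type*} [CommRing A] [AddCommGroup M]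
    [Module A M] (θ : M →ₗ[A] A) {I : Ideal A} {v : M} (hv : v ∈ I • (⊤ : Submodule A M)) :
    θ v ∈ I := by
  simpa using Submodule.smul_top_le_comap_smul_top I θ hv

theorem IsDedekindDomain.finite_setOf_isMaximal_mem {A : Type*} [CommRing A] [IsDedekindDomain A]
    {a : A} (ha : a ≠ 0) : {𝔪 : Ideal A | 𝔪.IsMaximal ∧ a ∈ 𝔪}.Finite := by
  have hspan : Ideal.span {a} ≠ ⊥ := by simpa [Ideal.span_singleton_eq_bot] using ha
  have := UniqueFactorizationMonoid.fintypeSubtypeDvd _ hspan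
  refine (Set.finite_coe_iff.mp (Finite.of_fintype {J : Ideal A // J ∣ Ideal.span {a}})).subset
    fun 𝔪 h𝔪 => ?_
  exact Ideal.dvd_iff_le.mpr ((Ideal.span_singleton_le_iff_mem _).mpr h𝔪.2)

theorem Submodule.rankIn_le_one_of_inf_ker_eq_bot {A M : Type*} [CommRing A] [IsDomain A]
    [AddCommGroup M] [Module A M] {N : Submodule A M} {θ : M →ₗ[A] A}
    (h : N ⊓ LinearMap.ker θ = ⊥) : N.rankIn ≤ 1 := by
  set K := FractionRing A
  set ι := TensorProduct.mk A K M 1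
  have hcross : ∀ u ∈ N, ∀ n ∈ N, θ u • n = θ n • u := fun u hu n hn => by
    have hmem : θ u • n - θ n • u ∈ N ⊓ LinearMap.ker θ :=
      ⟨N.sub_mem (N.smul_mem _ hn) (N.smul_mem _ hu), by simp [mul_comm]⟩
    rwa [h, Submodule.mem_bot, sub_eq_zero] at hmem
  obtain ⟨u, hspan⟩ : ∃ u : M, ι '' (N : Set M) ⊆ Submodule.span K {ι u} := by
    by_cases hN : ∀ n ∈ N, θ n = 0
    · refine ⟨0, Set.image_subset_iff.mpr fun n hn => ?_⟩
      have : n ∈ N ⊓ LinearMap.ker θ := ⟨hn, hN n hn⟩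
      rw [h, Submodule.mem_bot] at this
      simp [this]
    · obtain ⟨u, hu, hθu⟩ := not_forall₂.mp hN
      refine ⟨u, Set.image_subset_iff.mpr fun n hn => ?_⟩
      have hθu' : algebraMap A K (θ u) ≠ 0 :=
        (map_ne_zero_iff _ (IsFractionRing.injective A K)).mpr hθu
      rw [Set.mem_preimage, SetLike.mem_coe, ← Submodule.smul_mem_iff _ hθu', algebraMap_smul,
        ← map_smul, hcross u hu n hn, map_smul, ← algebraMap_smul K]
      exact Submodule.smul_mem _ _ (Submodule.mem_span_singleton_self _)
  calc N.rankIn ≤ Module.finrank K (Submodule.span K {ι u}) :=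
        Submodule.finrank_mono (Submodule.span_le.mpr hspan)
    _ ≤ 1 := by simpa using finrank_span_le_card ({ι u} : Set (K ⊗[A] M))

/-- Let `A` be a Dedekind domain and `M` a finitely generated
torsion-free `A`-module. If `N` is a pure submodule of `M` of rank at least `2`,
then `N` contains a unimodular vector of `M`. -/
theorem exists_unimodular_of_pure_dedekind {A M : Type*} [CommRing A]
    [IsDedekindDomain A] [AddCommGroup M] [Module A M]
    [Module.Finite A M] [NoZeroSMulDivisors A M]
    (N : Submodule A M) (hpure : NoZeroSMulDivisors A (M ⧸ N))
    (hrk : 2 ≤ N.rankIn) :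
    ∃ v ∈ N, ∃ θ : M →ₗ[A] A, θ v = 1 := by
  have : Module.FinitePresentation A M := Module.finitePresentation_of_finite A M
  have : Module.Projective A M := Module.Flat.projective_of_finitePresentation
  have hN : N ≠ ⊥ := fun h => by
    have := N.rankIn_le_one_of_inf_ker_eq_bot (θ := 0) (by simp [h])
    omega
  obtain ⟨u, hu, hu0⟩ := N.ne_bot_iff.mp hN
  obtain ⟨θ₀, hθ₀⟩ := Module.Projective.exists_dual_ne_zero A hu0
  set L := N ⊓ LinearMap.ker θ₀
  have hL : L ≠ ⊥ := fun h => by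
    have := N.rankIn_le_one_of_inf_ker_eq_bot h
    omega
  have : NoZeroSMulDivisors A (M ⧸ LinearMap.ker θ₀) := θ₀.noZeroSMulDivisors_quotient_ker
  have : NoZeroSMulDivisors A (M ⧸ L) := Submodule.noZeroSMulDivisors_quotient_inf
  have hT := IsDedekindDomain.finite_setOf_isMaximal_mem hθ₀
  obtain ⟨w, hwL, hw⟩ := L.exists_mem_forall_add_notMem_smul_top u (T := hT.toFinset)
    (fun 𝔪 h𝔪 => (hT.mem_toFinset.mp h𝔪).1) fun 𝔪 h𝔪 =>
      L.exists_mem_add_notMem_of_not_le (L.not_le_smul_top_of_flat_quotient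
        (IsNoetherian.noetherian L) hL (hT.mem_toFinset.mp h𝔪).1.ne_top) u
  refine ⟨u + w, N.add_mem hu hwL.1,
    Module.Projective.exists_dual_eq_one_of_forall_notMem_smul_top fun 𝔪 h𝔪 hmem => ?_⟩
  by_cases hu𝔪 : θ₀ u ∈ 𝔪
  · exact hw 𝔪 (hT.mem_toFinset.mpr ⟨h𝔪, hu𝔪⟩) hmem
  · have := θ₀.apply_mem_of_mem_smul_top hmem
    rw [map_add, LinearMap.mem_ker.mp hwL.2, add_zero] at this
    exact hu𝔪 this
end

section
/- Let A be a Dedekind domain, M a finitely generated torsion-free A-module, and N ≤ M a pure submodule of rank 1. Then N contains a unimodular vector of M if and only if N is a free A-module. -/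
open TensorProduct

/-!
If `θ v = 1` for some `v ∈ N`, then `θ` restricted to `N` is onto `A`. It is also injective: as `N`
has rank one, every `w ∈ N` satisfies `s • w = a • v` for some `s ≠ 0`, and applying `θ` gives
`a = s * θ w`, so `θ w = 0` forces `s • w = 0`, i.e. `w = 0`. Hence `N ≅ A`.

Conversely, `M ⧸ N` is finitely generated and torsion-free over a Dedekind domain, hence free over
each localization at a maximal ideal (a PID), hence projective. So `N` is a direct summand of `M`,
and a basis vector of the nonzero free module `N` is unimodular: its coordinate function composed
with the retraction `M → N` takes the value `1` on it.
-/

theorem IsDedekindDomain.projective_of_finite_of_isTorsionFree {A Q : Type*} [CommRing A]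
    [IsDedekindDomain A] [AddCommGroup Q] [Module A Q] [Module.Finite A Q]
    [Module.IsTorsionFree A Q] : Module.Projective A Q := by
  have : Module.FinitePresentation A Q := Module.finitePresentation_of_finite A Q
  refine Module.projective_of_localization_maximal fun P _ ↦ ?_
  have : Module.Finite (Localization.AtPrime P) (LocalizedModule P.primeCompl Q) :=
    Module.Finite.of_isLocalizedModule P.primeCompl (LocalizedModule.mkLinearMap P.primeCompl Q)
  infer_instance

namespace Submodule

section CommRing

variable {A M : Type*} [CommRing A] [AddCommGroup M] [Module A M] (N : Submodule A M)

theorem exists_apply_eq_one_of_projective_quotient [Module.Projective A (M ⧸ N)]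
    [Module.Free A N] [Nontrivial N] : ∃ v ∈ N, ∃ θ : M →ₗ[A] A, θ v = 1 := by
  obtain ⟨r, hr⟩ := ((Function.Exact.split_tfae (LinearMap.exact_subtype_mkQ N)
    N.injective_subtype N.mkQ_surjective).out 0 1).mp
    (N.mkQ.exists_rightInverse_of_surjective N.range_mkQ)
  let b := Module.Free.chooseBasis A N
  obtain ⟨i⟩ := b.index_nonempty
  refine ⟨b i, (b i).2, b.coord i ∘ₗ r, ?_⟩
  have hri : r (b i) = b i := LinearMap.congr_fun hr (b i)
  simp [hri]

end CommRing

variable {A M : Type*} [CommRing A] [IsDomain A] [AddCommGroup M] [Module A M]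
  {N : Submodule A M}

theorem ne_bot_of_rankIn_eq_one (hrk : N.rankIn = 1) : N ≠ ⊥ := by
  rintro rfl
  rw [rankIn, bot_coe, Set.image_singleton, map_zero, span_zero_singleton, finrank_bot] at hrk
  exact zero_ne_one hrk

variable [Module.IsTorsionFree A M]

theorem exists_smul_eq_smul_of_rankIn_eq_one (hrk : N.rankIn = 1) {v w : M} (hv : v ∈ N)
    (hw : w ∈ N) (hv0 : v ≠ 0) : ∃ a : A, ∃ s ∈ nonZeroDivisors A, s • w = a • v := by
  simp only [rankIn] at hrk
  set f := TensorProduct.mk A (FractionRing A) M 1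
  have hf : Function.Injective f :=
    (IsLocalizedModule.injective_iff_isRegular (nonZeroDivisors A) f).mpr fun s ↦
      .of_ne_zero (nonZeroDivisors.coe_ne_zero s)
  set S := span (FractionRing A) (f '' N)
  have hfv : f v ∈ S := subset_span ⟨v, hv, rfl⟩
  have hfw : f w ∈ S := subset_span ⟨w, hw, rfl⟩
  have hfv0 : (⟨f v, hfv⟩ : S) ≠ 0 := by
    simpa using (hf.ne hv0).trans_eq (map_zero f)
  obtain ⟨c, hcv⟩ := (finrank_eq_one_iff_of_nonzero' (⟨f v, hfv⟩ : S) hfv0).mp hrk ⟨f w, hfw⟩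
  obtain ⟨⟨a, s⟩, rfl⟩ := IsLocalization.mk'_surjective (nonZeroDivisors A) c
  refine ⟨a, s, s.2, hf ?_⟩
  have hc : IsLocalization.mk' (FractionRing A) a s • f v = f w := congrArg Subtype.val hcv
  rw [map_smul, map_smul, ← hc, ← algebraMap_smul (FractionRing A) (s : A), smul_smul,
    IsLocalization.mk'_spec', algebraMap_smul]

theorem free_of_rankIn_eq_one_of_apply_eq_one (hrk : N.rankIn = 1) {v : M} (hv : v ∈ N)
    {θ : M →ₗ[A] A} (hθ : θ v = 1) : Module.Free A N := by
  have hv0 : v ≠ 0 := by rintro rfl; simp at hθ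
  have hinj : Function.Injective (θ.domRestrict N) := by
    refine (injective_iff_map_eq_zero _).mpr fun ⟨w, hw⟩ hθw ↦ ?_
    obtain ⟨a, s, hs, hsw⟩ := exists_smul_eq_smul_of_rankIn_eq_one hrk hv hw hv0
    rw [LinearMap.domRestrict_apply] at hθw
    have ha : a = 0 := by simpa [hθ, hθw] using (congrArg θ hsw).symm
    rw [ha, zero_smul, smul_eq_zero_iff_right (nonZeroDivisors.ne_zero hs)] at hsw
    simpa using hsw
  have hsurj : Function.Surjective (θ.domRestrict N) := fun a ↦
    ⟨⟨a • v, N.smul_mem a hv⟩, by simp [hθ]⟩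
  exact .of_equiv (LinearEquiv.ofBijective _ ⟨hinj, hsurj⟩).symm

end Submodule

/-- Let `A` be a Dedekind domain, `M` a finitely generated
torsion-free `A`-module, and `N ≤ M` a pure submodule of rank `1`. Then `N`
contains a unimodular vector of `M` if and only if `N` is a free `A`-module. -/
theorem unimodular_iff_free_of_pure_rank_one {A M : Type*} [CommRing A]
    [IsDedekindDomain A] [AddCommGroup M] [Module A M]
    [Module.Finite A M] [NoZeroSMulDivisors A M]
    (N : Submodule A M) (hpure : NoZeroSMulDivisors A (M ⧸ N))
    (hrk : N.rankIn = 1) :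
    (∃ v ∈ N, ∃ θ : M →ₗ[A] A, θ v = 1) ↔ Module.Free A N := by
  refine ⟨fun ⟨v, hv, θ, hθ⟩ ↦ N.free_of_rankIn_eq_one_of_apply_eq_one hrk hv hθ, fun _ ↦ ?_⟩
  have : Module.Projective A (M ⧸ N) := IsDedekindDomain.projective_of_finite_of_isTorsionFree
  have : Nontrivial N := N.nontrivial_iff_ne_bot.mpr (N.ne_bot_of_rankIn_eq_one hrk)
  exact N.exists_apply_eq_one_of_projective_quotient
end

section
/- Let A be a Dedekind domain which is not a PID and let I ⊂ A be a nonprincipal ideal. Then the dual module I* = Hom_A(I, A) embeds into A² as a pure submodule of rank 1 that contains no unimodular vector of A². -/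
open TensorProduct

/-!
Write `I = (a, b)` with `a ≠ 0`. Since `x φ(y) = y φ(x)` for `φ ∈ I*` and `x, y ∈ I`, evaluation
at `a` and `b` embeds `I*` into `A²` with image the kernel `{(p, q) | b p = a q}` of a linear form,
so the image is pure of rank one. If `θ(φ a, φ b) = 1` for some `φ ∈ I*` and `θ : A² → A`, then
`x = φ(x) θ(a, b)` for every `x ∈ I`, so `I` is generated by `θ(a, b)`.
-/

theorem LinearMap.noZeroSMulDivisors_quotient_ker_s5 {R M N : Type*} [Ring R] [AddCommGroup M]
    [Module R M] [AddCommGroup N] [Module R N] [NoZeroSMulDivisors R N] (g : M →ₗ[R] N) :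
    NoZeroSMulDivisors R (M ⧸ LinearMap.ker g) :=
  Function.Injective.noZeroSMulDivisors _
    (LinearMap.ker_eq_bot.mp ((LinearMap.ker g).ker_liftQ_eq_bot g le_rfl le_rfl))
    (map_zero _) (map_smul _)

theorem Submodule.rankIn_eq_one_of_smul_mem_span_singleton {A M : Type*} [CommRing A]
    [IsDomain A] [AddCommGroup M] [Module A M] [Module.IsTorsionFree A M] {N : Submodule A M}
    {v : M} (hvN : v ∈ N) (hv : v ≠ 0) (hN : ∀ w ∈ N, ∃ c d : A, c ≠ 0 ∧ c • w = d • v) :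
    N.rankIn = 1 := by
  set K := FractionRing A
  set ι := TensorProduct.mk A K M 1
  have hιv : ι v ≠ 0 := by
    rw [Ne, IsLocalizedModule.eq_zero_iff (nonZeroDivisors A)]
    rintro ⟨⟨c, hc⟩, hcv⟩
    exact hv ((smul_eq_zero.mp hcv).resolve_left (nonZeroDivisors.ne_zero hc))
  have hspan : Submodule.span K (ι '' N) = K ∙ ι v := by
    refine le_antisymm (Submodule.span_le.mpr ?_)
      (Submodule.span_le.mpr (Set.singleton_subset_iff.mpr (Submodule.subset_span ⟨v, hvN, rfl⟩)))
    rintro _ ⟨w, hw, rfl⟩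
    obtain ⟨c, d, hc, hcw⟩ := hN w hw
    have hc' : algebraMap A K c ≠ 0 := IsFractionRing.to_map_ne_zero_of_mem_nonZeroDivisors
      (mem_nonZeroDivisors_of_ne_zero hc)
    have hιw : algebraMap A K c • ι w = algebraMap A K d • ι v := by
      simp only [algebraMap_smul, ← map_smul, hcw]
    rw [SetLike.mem_coe, Submodule.mem_span_singleton]
    exact ⟨(algebraMap A K c)⁻¹ * algebraMap A K d, by rw [mul_smul, ← hιw, inv_smul_smul₀ hc']⟩
  rw [Submodule.rankIn, hspan, finrank_span_singleton hιv]

theorem Submodule.rankIn_ker_smul_fst_sub_smul_snd {A : Type*} [CommRing A] [IsDomain A] {a : A}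
    (ha : a ≠ 0) (b : A) :
    (LinearMap.ker (b • LinearMap.fst A A A - a • LinearMap.snd A A A)).rankIn = 1 := by
  refine Submodule.rankIn_eq_one_of_smul_mem_span_singleton (v := (a, b)) ?_ (by simp [ha]) ?_
  · simp [mul_comm]
  · rintro ⟨p, q⟩ hpq
    simp only [LinearMap.mem_ker, LinearMap.sub_apply, LinearMap.smul_apply, LinearMap.fst_apply,
      LinearMap.snd_apply, smul_eq_mul, sub_eq_zero] at hpq
    refine ⟨a, p, ha, Prod.ext (mul_comm a p) ?_⟩
    simp only [Prod.smul_mk, smul_eq_mul]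
    rw [← hpq, mul_comm]

namespace Ideal

variable {A : Type*} [CommRing A] {I : Ideal A}

theorem coe_mul_apply_comm (φ : I →ₗ[A] A) (x y : I) : (x : A) * φ y = y * φ x := by
  simpa only [← smul_eq_mul, ← map_smul] using congrArg φ (Subtype.ext (mul_comm (x : A) y))

theorem exists_linearMap_mul_eq_of_dvd [IsDomain A] {x : A} (hx : x ≠ 0) (p : A)
    (h : ∀ z ∈ I, x ∣ p * z) : ∃ ψ : I →ₗ[A] A, ∀ z : I, ψ z * x = p * z := by
  have hmem (z : I) : p * z ∈ A ∙ x := by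
    obtain ⟨c, hc⟩ := h z z.2
    exact Submodule.mem_span_singleton.mpr ⟨c, by rw [hc, smul_eq_mul, mul_comm]⟩
  exact ⟨(LinearEquiv.toSpanNonzeroSingleton A A x hx).symm.toLinearMap ∘ₗ
    (p • I.subtype).codRestrict (A ∙ x) hmem,
    fun z => LinearEquiv.toSpanNonzeroSingleton_symm_apply_smul A A x hx ⟨_, hmem z⟩⟩

def evalPair (x y : I) : (I →ₗ[A] A) →ₗ[A] A × A :=
  (LinearMap.applyₗ x).prod (LinearMap.applyₗ y)

@[simp]
theorem evalPair_apply (x y : I) (φ : I →ₗ[A] A) : evalPair x y φ = (φ x, φ y) := rfl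

theorem evalPair_injective [IsDomain A] {x : I} (hx : (x : A) ≠ 0) (y : I) :
    Function.Injective (evalPair x y) := by
  intro φ ψ h
  have hφψ : φ x = ψ x := congrArg Prod.fst h
  ext z
  refine mul_left_cancel₀ hx ?_
  rw [coe_mul_apply_comm, coe_mul_apply_comm ψ, hφψ]

theorem range_evalPair [IsDomain A] {x y : I} (hI : I = span {(x : A), (y : A)})
    (hx : (x : A) ≠ 0) :
    LinearMap.range (evalPair x y) =
      LinearMap.ker ((y : A) • LinearMap.fst A A A - (x : A) • LinearMap.snd A A A) := by
  ext ⟨p, q⟩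
  simp only [LinearMap.mem_range, evalPair_apply, LinearMap.mem_ker, LinearMap.sub_apply,
    LinearMap.smul_apply, LinearMap.fst_apply, LinearMap.snd_apply, smul_eq_mul, sub_eq_zero]
  constructor
  · rintro ⟨φ, hφ⟩
    obtain ⟨rfl, rfl⟩ := Prod.mk.inj hφ
    exact coe_mul_apply_comm φ y x
  · intro hpq
    have hdvd : ∀ z ∈ I, (x : A) ∣ p * z := by
      intro z hz
      obtain ⟨u, v, rfl⟩ := mem_span_pair.mp (hI ▸ hz)
      exact ⟨u * p + v * q, by linear_combination v * hpq⟩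
    obtain ⟨ψ, hψ⟩ := exists_linearMap_mul_eq_of_dvd hx p hdvd
    refine ⟨ψ, Prod.ext (mul_right_cancel₀ hx ?_) (mul_right_cancel₀ hx ?_)⟩
    · rw [hψ]
    · rw [hψ, mul_comm, hpq, mul_comm]

theorem isPrincipal_of_evalPair_apply_eq_one {x y : I} {φ : I →ₗ[A] A} {θ : A × A →ₗ[A] A}
    (h : θ (evalPair x y φ) = 1) : I.IsPrincipal := by
  have hθ (z : I) : (z : A) = φ z * θ (x, y) :=
    calc (z : A) = z * θ (φ x, φ y) := by rw [← evalPair_apply, h, mul_one]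
      _ = θ (φ z • ((x : A), (y : A))) := by
          rw [← smul_eq_mul, ← map_smul]
          simp only [Prod.smul_mk, smul_eq_mul, coe_mul_apply_comm φ z, mul_comm (φ z)]
      _ = φ z * θ (x, y) := by rw [map_smul, smul_eq_mul]
  have hxy : θ (x, y) ∈ I := by
    have hbasis : ((x : A), (y : A)) = (x : A) • (1, 0) + (y : A) • (0, 1) := by simp
    rw [hbasis, map_add, map_smul, map_smul]
    exact add_mem (I.mul_mem_right _ x.2) (I.mul_mem_right _ y.2)
  refine ⟨⟨θ (x, y), le_antisymm (fun z hz => ?_) ((span_singleton_le_iff_mem I).mpr hxy)⟩⟩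
  exact Submodule.mem_span_singleton.mpr ⟨φ ⟨z, hz⟩, (hθ ⟨z, hz⟩).symm⟩

end Ideal

/-- Let `A` be a Dedekind domain and `I ⊂ A` a nonzero
nonprincipal ideal. Then the dual module `I* = Hom_A(I, A)` embeds into `A²`
as a pure submodule of rank `1` containing no unimodular vector of `A²`. -/
theorem dual_of_nonprincipal_embeds_pure_no_unimodular {A : Type*} [CommRing A]
    [IsDedekindDomain A] (I : Ideal A) (hI : I ≠ ⊥) (hnp : ¬ I.IsPrincipal) :
    ∃ f : (↥I →ₗ[A] A) →ₗ[A] A × A,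
      Function.Injective f ∧
      NoZeroSMulDivisors A ((A × A) ⧸ LinearMap.range f) ∧
      (LinearMap.range f).rankIn = 1 ∧
      ∀ v ∈ LinearMap.range f, ∀ θ : A × A →ₗ[A] A, θ v ≠ 1 := by
  obtain ⟨a, haI, ha⟩ := Submodule.exists_mem_ne_zero_of_ne_bot hI
  obtain ⟨b, hab⟩ := IsDedekindDomain.exists_eq_span_pair haI ha
  have hbI : b ∈ I := hab ▸ Ideal.subset_span (by simp)
  have hrange := Ideal.range_evalPair (x := ⟨a, haI⟩) (y := ⟨b, hbI⟩) hab ha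
  refine ⟨Ideal.evalPair ⟨a, haI⟩ ⟨b, hbI⟩, Ideal.evalPair_injective ha _, ?_, ?_, ?_⟩
  · rw [hrange]
    exact LinearMap.noZeroSMulDivisors_quotient_ker_s5 _
  · rw [hrange]
    exact Submodule.rankIn_ker_smul_fst_sub_smul_snd ha b
  · rintro _ ⟨φ, rfl⟩ θ hθ
    exact hnp (Ideal.isPrincipal_of_evalPair_apply_eq_one hθ)
end

section
/- Let G be an abelian group generated by symbols [v₀,…,v_{n-1}] for tuples of nonzero vectors of an n-dimensional vector space V, subject to: (c) [v₀,…,v_{n-1}] = 0 whenever v₀,…,v_{n-1} are linearly dependent, and (d) Σ_{i=0}^{n} (-1)^i [v₀,…,v̂ᵢ,…,v_n] = 0 for all tuples of n+1 nonzero vectors. Then the antisymmetry relation holds: swapping two adjacent entries changes the sign of the symbol. -/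
/-!
Apply the boundary relation to `w = (v₀, …, v_{i+1}, v_i, v_{i+1}, …, v_{n-1})`, i.e. `v` with
`v_{i+1}` inserted at position `i`. Deleting entry `i` gives `v`, deleting entry `i + 2` gives the
swapped tuple, and every other facet still contains `v_{i+1}` twice, so it is linearly dependent
and vanishes. The two surviving terms carry the same sign `(-1)^i`.
-/

namespace Fin

theorem insertNth_castSucc_comp_succAbove_eq_comp_swap {α : Type*} {n : ℕ} (v : Fin n → α)
    (i : Fin n) (hi : (i : ℕ) + 1 < n) :
    insertNth i.castSucc (v ⟨i + 1, hi⟩) v ∘ succAbove ⟨i + 2, by omega⟩ =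
      v ∘ Equiv.swap i ⟨i + 1, hi⟩ := by
  funext k
  obtain rfl | hki := eq_or_ne k i
  · rw [Function.comp_apply,
      succAbove_of_castSucc_lt _ _ (by simp only [lt_def, val_castSucc]; omega),
      insertNth_apply_same, Function.comp_apply, Equiv.swap_apply_left]
  obtain rfl | hkj := eq_or_ne k ⟨i + 1, hi⟩
  · have hsucc : (⟨i + 1, by omega⟩ : Fin (n + 1)) = i.castSucc.succAbove i :=
      (succAbove_of_le_castSucc _ _ le_rfl).symm
    rw [Function.comp_apply,
      succAbove_of_castSucc_lt _ _ (by simp only [lt_def, val_castSucc]; omega),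
      Function.comp_apply, Equiv.swap_apply_right]
    exact (congrArg _ hsucc).trans (insertNth_apply_succAbove _ _ _ _)
  have hk : succAbove ⟨i + 2, by omega⟩ k = i.castSucc.succAbove k := by
    have hki' : (k : ℕ) ≠ i := fun h => hki (Fin.ext h)
    have hkj' : (k : ℕ) ≠ i + 1 := fun h => hkj (Fin.ext h)
    rcases lt_or_gt_of_ne hki' with h | h
    · rw [succAbove_of_castSucc_lt _ _ (by simp only [lt_def, val_castSucc]; omega),
        succAbove_of_castSucc_lt _ _ (by simp only [lt_def, val_castSucc]; omega)]
    · rw [succAbove_of_le_castSucc _ _ (by simp only [le_def, val_castSucc]; omega),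
        succAbove_of_le_castSucc _ _ (by simp only [le_def, val_castSucc]; omega)]
  rw [Function.comp_apply, hk, insertNth_apply_succAbove, Function.comp_apply,
    Equiv.swap_apply_of_ne_of_ne hki hkj]

end Fin

theorem not_linearIndependent_comp_succAbove {K V : Type*} [Semiring K] [Nontrivial K]
    [AddCommMonoid V] [Module K V] {n : ℕ} {w : Fin (n + 1) → V} {a b p : Fin (n + 1)} (hab : a ≠ b)
    (hw : w a = w b) (hap : a ≠ p) (hbp : b ≠ p) :
    ¬ LinearIndependent K (w ∘ p.succAbove) := by
  intro hli
  obtain ⟨a', rfl⟩ := Fin.exists_succAbove_eq hap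
  obtain ⟨b', rfl⟩ := Fin.exists_succAbove_eq hbp
  exact hab (congrArg _ (hli.injective hw))

theorem symbol_comp_swap_add_self_eq_zero {K V M : Type*} [Semiring K] [Nontrivial K]
    [AddCommMonoid V] [Module K V] [AddCommGroup M] {n : ℕ} (s : (Fin n → V) → M)
    (hc : ∀ v : Fin n → V, ¬ LinearIndependent K v → s v = 0)
    (hd : ∀ w : Fin (n + 1) → V, (∀ i, w i ≠ 0) →
      ∑ i : Fin (n + 1), (-1 : ℤ) ^ (i : ℕ) • s (w ∘ i.succAbove) = 0)
    (v : Fin n → V) (hv : ∀ i, v i ≠ 0) (i : Fin n) (hi : (i : ℕ) + 1 < n) :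
    s (v ∘ Equiv.swap i ⟨i + 1, hi⟩) + s v = 0 := by
  set w : Fin (n + 1) → V := Fin.insertNth i.castSucc (v ⟨i + 1, hi⟩) v
  set p : Fin (n + 1) := i.castSucc
  set q : Fin (n + 1) := ⟨i + 2, by omega⟩
  have hpq : p ≠ q := fun h => by simp [p, q, Fin.ext_iff] at h
  have hw : ∀ k, w k ≠ 0 := fun k =>
    p.succAboveCases (by simp [w, p, hv]) (by simp [w, p, hv]) k
  have hwpq : w p = w q := by
    have hq : q = p.succAbove ⟨i + 1, hi⟩ :=
      (Fin.succAbove_of_le_castSucc p ⟨i + 1, hi⟩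
        (by simp only [p, Fin.le_def, Fin.val_castSucc]; omega)).symm
    simp only [w, hq, Fin.insertNth_apply_succAbove, p, Fin.insertNth_apply_same]
  have hdegenerate :
      ∀ r, r ≠ p ∧ r ≠ q → (-1 : ℤ) ^ (r : ℕ) • s (w ∘ r.succAbove) = 0 :=
    fun r ⟨hrp, hrq⟩ => by
      rw [hc _ (not_linearIndependent_comp_succAbove (K := K) hpq hwpq hrp.symm hrq.symm),
        smul_zero]
  have hboundary := hd w hw
  rw [Fintype.sum_eq_add p q hpq hdegenerate, Fin.insertNth_comp_succAbove,
    Fin.insertNth_castSucc_comp_succAbove_eq_comp_swap] at hboundary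
  have hsign : (-1 : ℤ) ^ (q : ℕ) = (-1) ^ (p : ℕ) := by simp [p, q, pow_add]
  rw [hsign, ← smul_add, ((isUnit_neg_one (α := ℤ)).pow _).smul_eq_zero] at hboundary
  rwa [add_comm]

theorem modular_symbol_antisymmetry_general {K V : Type*} [Field K] [AddCommGroup V]
    [Module K V] {n : ℕ}
    (R : AddSubgroup (FreeAbelianGroup (Fin n → V)))
    (hc : ∀ v : Fin n → V, ¬ LinearIndependent K v → FreeAbelianGroup.of v ∈ R)
    (hd : ∀ w : Fin (n + 1) → V, (∀ i, w i ≠ 0) →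
      (∑ i : Fin (n + 1), (-1 : ℤ) ^ (i : ℕ) •
        FreeAbelianGroup.of (w ∘ i.succAbove)) ∈ R)
    (v : Fin n → V) (hv : ∀ i, v i ≠ 0) (i : Fin n) (hi : (i : ℕ) + 1 < n) :
    FreeAbelianGroup.of (v ∘ Equiv.swap i ⟨(i : ℕ) + 1, hi⟩) +
      FreeAbelianGroup.of v ∈ R := by
  rw [← QuotientAddGroup.eq_zero_iff, QuotientAddGroup.mk_add]
  refine symbol_comp_swap_add_self_eq_zero (K := K) (fun u => (FreeAbelianGroup.of u : _ ⧸ R))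
    (fun u hu => (QuotientAddGroup.eq_zero_iff _).mpr (hc u hu)) (fun w hw => ?_) v hv i hi
  simpa only [QuotientAddGroup.mk_sum, QuotientAddGroup.mk_zsmul] using
    (QuotientAddGroup.eq_zero_iff _).mpr (hd w hw)

/-- Let `G` be the abelian group generated by symbols
`[v₀,…,v_{n-1}]` (tuples of nonzero vectors of an `n`-dimensional vector space
`V`) subject to relation (c): the symbol vanishes on linearly dependent tuples,
and relation (d): the alternating sum of the facets of any `(n+1)`-tuple of
nonzero vectors vanishes. Then antisymmetry holds: swapping two adjacent
entries changes the sign of the symbol. Formally, for any subgroup `R` of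
relations of the free abelian group containing the relations (c) and (d), the
element `[…,v_{i+1},v_i,…] + […,v_i,v_{i+1},…]` lies in `R`. -/
theorem modular_symbol_antisymmetry {K V : Type*} [Field K] [AddCommGroup V]
    [Module K V] {n : ℕ} (hn : 2 ≤ n) (hdim : Module.finrank K V = n)
    (R : AddSubgroup (FreeAbelianGroup (Fin n → V)))
    (hc : ∀ v : Fin n → V, ¬ LinearIndependent K v → FreeAbelianGroup.of v ∈ R)
    (hd : ∀ w : Fin (n + 1) → V, (∀ i, w i ≠ 0) →
      (∑ i : Fin (n + 1), (-1 : ℤ) ^ (i : ℕ) •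
        FreeAbelianGroup.of (w ∘ i.succAbove)) ∈ R)
    (v : Fin n → V) (hv : ∀ i, v i ≠ 0) (i : Fin n) (hi : (i : ℕ) + 1 < n) :
    FreeAbelianGroup.of (v ∘ Equiv.swap i ⟨(i : ℕ) + 1, hi⟩) +
      FreeAbelianGroup.of v ∈ R :=
  modular_symbol_antisymmetry_general R hc hd v hv i hi
end

section
/- With the same presentation as above (relations (c) and (d)), the homogeneity relation holds: [a·v₀, v₁,…,v_{n-1}] = [v₀, v₁,…,v_{n-1}] for every nonzero scalar a. -/
/-!
Apply relation (d) to the `(n+1)`-tuple `(v₀, a·v₀, v₁, …, v_{n-1})`. Omitting the first entry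
gives `[a·v₀, v₁, …]`, omitting the second gives `-[v₀, v₁, …]`, and every other facet contains
both `v₀` and `a·v₀`, so it is linearly dependent and vanishes by relation (c).
-/

open FreeAbelianGroup

theorem AddSubgroup.sum_fin_mem_iff_add_mem {G : Type*} [AddCommGroup G] (R : AddSubgroup G)
    {m : ℕ} (f : Fin (m + 2) → G) (hf : ∀ i : Fin m, f i.succ.succ ∈ R) :
    ∑ i, f i ∈ R ↔ f 0 + f 1 ∈ R := by
  rw [Fin.sum_univ_succ, Fin.sum_univ_succ, ← add_assoc]
  exact R.add_mem_cancel_right (R.sum_mem fun i _ => hf i)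

section Facets

variable {K V : Type*} [Field K] [AddCommGroup V] [Module K V]

theorem not_linearIndependent_comp_succAbove_s9 {m : ℕ} {w : Fin (m + 2) → V} {a : K}
    (hw : w 1 = a • w 0) {k : Fin (m + 2)} (hk₀ : k ≠ 0) (hk₁ : k ≠ 1) :
    ¬LinearIndependent K (w ∘ k.succAbove) := fun hli => by
  obtain ⟨x, hx⟩ := Fin.exists_succAbove_eq hk₀.symm
  obtain ⟨y, hy⟩ := Fin.exists_succAbove_eq hk₁.symm
  have hxy : y = x :=
    hli.eq_of_smul_apply_eq_smul_apply 1 a y x one_ne_zero (by simp [hx, hy, hw])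
  exact zero_ne_one (hx.symm.trans (hxy ▸ hy))

theorem of_cons_smul_tail_sub_of_self_mem {m : ℕ}
    (R : AddSubgroup (FreeAbelianGroup (Fin (m + 1) → V)))
    (hc : ∀ v : Fin (m + 1) → V, ¬LinearIndependent K v → of v ∈ R)
    (hd : ∀ w : Fin (m + 2) → V, (∀ i, w i ≠ 0) →
      (∑ i : Fin (m + 2), (-1 : ℤ) ^ (i : ℕ) • of (w ∘ i.succAbove)) ∈ R)
    (v : Fin (m + 1) → V) (hv : ∀ i, v i ≠ 0) {a : K} (ha : a ≠ 0) :
    of (Fin.cons (a • v 0) (Fin.tail v) : Fin (m + 1) → V) - of v ∈ R := by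
  set w : Fin (m + 2) → V := Fin.cons (v 0) (Fin.cons (a • v 0) (Fin.tail v))
  have hw : ∀ i, w i ≠ 0 :=
    Fin.cases (hv 0) (Fin.cases (smul_ne_zero ha (hv 0)) fun i => hv i.succ)
  have hfacet₀ : w ∘ Fin.succ = Fin.cons (a • v 0) (Fin.tail v) := rfl
  have hfacet₁ : w ∘ Fin.succAbove 1 = v := by
    ext i; cases i using Fin.cases <;> simp [w, Fin.tail]
  have hdependent (i : Fin m) : ¬LinearIndependent K (w ∘ i.succ.succ.succAbove) :=
    not_linearIndependent_comp_succAbove_s9 (w := w) (a := a) (by simp [w]) (Fin.succ_ne_zero _)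
      (Fin.succ_injective _ |>.ne (Fin.succ_ne_zero i))
  have hfacets := (R.sum_fin_mem_iff_add_mem _ fun i => R.zsmul_mem (hc _ (hdependent i)) _).mp
    (hd w hw)
  simpa [hfacet₀, hfacet₁, sub_eq_add_neg] using hfacets

end Facets

/-- With the presentation of the Steinberg module by symbols
`[v₀,…,v_{n-1}]` (tuples of nonzero vectors) modulo relation (c) (the symbol
vanishes on linearly dependent tuples) and relation (d) (the alternating sum of
the facets of any `(n+1)`-tuple of nonzero vectors vanishes), the homogeneity
relation holds: `[a·v₀, v₁,…,v_{n-1}] = [v₀, v₁,…,v_{n-1}]` for every nonzero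
scalar `a`. Formally, for any subgroup `R` of relations containing (c) and (d),
`[a·v₀,v₁,…] − [v₀,v₁,…]` lies in `R`. -/
theorem modular_symbol_homogeneous {K V : Type*} [Field K] [AddCommGroup V]
    [Module K V] {n : ℕ} (hn : 2 ≤ n)
    (R : AddSubgroup (FreeAbelianGroup (Fin n → V)))
    (hc : ∀ v : Fin n → V, ¬ LinearIndependent K v → FreeAbelianGroup.of v ∈ R)
    (hd : ∀ w : Fin (n + 1) → V, (∀ i, w i ≠ 0) →
      (∑ i : Fin (n + 1), (-1 : ℤ) ^ (i : ℕ) •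
        FreeAbelianGroup.of (w ∘ i.succAbove)) ∈ R)
    (v : Fin n → V) (hv : ∀ i, v i ≠ 0) (a : K) (ha : a ≠ 0) :
    FreeAbelianGroup.of (Function.update v ⟨0, by omega⟩ (a • v ⟨0, by omega⟩)) -
      FreeAbelianGroup.of v ∈ R := by
  obtain ⟨m, rfl⟩ : ∃ m, n = m + 1 := ⟨n - 1, by omega⟩
  rw [Fin.mk_zero', ← Fin.cons_self_tail v, Fin.update_cons_zero, Fin.cons_self_tail]
  exact of_cons_smul_tail_sub_of_self_mem R hc hd v hv ha
end
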